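/- Let α in N^d be a vector of positive integers, let n = d+1, let â = (α, 0) in R^n, and define P_n := {(x, ξ_n) in R^{n−1} × R : −2 ≤ x_i ≤ 2 for all i, 1 ≤ ξ_n ≤ 1, 0 ≤ 2 α·x ≤ 1}. If there is no x in {−1,1}^{n−1} with α·x = 0 (i.e., the Partition instance has no solution), then P_n ∩ {−1,1}^n is empty. Moreover, in that case, for any y in P_n and any w in {−1,1}^{n−1} × R, |w − y| ≥ 1/(2|α|) > 0. -/

import Mathlib

/-!
Write `â = (α, 0)`. A point `y` of `P_n` satisfies `|⟪â, y⟫| = |α·x| ≤ 1/2`, while for `w` with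
`±1` entries `⟪â, w⟫` is a nonzero integer when Partition has no solution, so `|⟪â, w⟫| ≥ 1`.
Cauchy–Schwarz then gives `1/2 ≤ |⟪â, w - y⟫| ≤ |â| |w - y|`; the all-ones `w` shows `â ≠ 0`,
and taking `w = y` shows that `P_n` contains no vertex of the cube.
-/

open RealInnerProductSpace

/-- The slab polyhedron `P_n` of the Partition reduction, in `ℝⁿ = ℝ^{d+1}`. -/
def slabPn (d : ℕ) (α : Fin d → ℕ) : Set (EuclideanSpace ℝ (Fin (d + 1))) :=
  {y | (∀ i : Fin d, -2 ≤ y i.castSucc ∧ y i.castSucc ≤ 2) ∧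
    (1 ≤ y (Fin.last d) ∧ y (Fin.last d) ≤ 1) ∧
    (0 ≤ 2 * ∑ i, (α i : ℝ) * y i.castSucc ∧
      2 * ∑ i, (α i : ℝ) * y i.castSucc ≤ 1)}

section Separation

variable {E : Type*} [NormedAddCommGroup E] [InnerProductSpace ℝ E] {a w y : E}

theorem norm_pos_of_one_le_abs_inner (hw : 1 ≤ |⟪a, w⟫|) : 0 < ‖a‖ :=
  norm_pos_iff.2 fun ha => by norm_num [ha] at hw

theorem one_div_two_mul_norm_le_dist (hw : 1 ≤ |⟪a, w⟫|) (hy : |⟪a, y⟫| ≤ 1 / 2) :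
    1 / (2 * ‖a‖) ≤ dist w y := by
  have ha := norm_pos_of_one_le_abs_inner hw
  have hgap : 1 / 2 ≤ ‖a‖ * dist w y :=
    calc 1 / 2 ≤ |⟪a, w⟫| - |⟪a, y⟫| := by linarith
      _ ≤ |⟪a, w⟫ - ⟪a, y⟫| := abs_sub_abs_le_abs_sub _ _
      _ = |⟪a, w - y⟫| := by rw [inner_sub_right]
      _ ≤ ‖a‖ * dist w y := by rw [dist_eq_norm]; exact abs_real_inner_le_norm a (w - y)
  rw [div_le_iff₀ (by positivity)]
  linarith

end Separation

section ExtendByZero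

variable {d : ℕ}

noncomputable def extendByZero (a : Fin d → ℝ) : EuclideanSpace ℝ (Fin (d + 1)) :=
  WithLp.toLp 2 (Fin.snoc a 0)

theorem inner_extendByZero (a : Fin d → ℝ) (v : EuclideanSpace ℝ (Fin (d + 1))) :
    ⟪extendByZero a, v⟫ = ∑ i, a i * v i.castSucc := by
  simp [extendByZero, PiLp.inner_apply, Fin.sum_univ_castSucc, mul_comm]

theorem norm_extendByZero (a : Fin d → ℝ) : ‖extendByZero a‖ = √(∑ i, a i ^ 2) := by
  simp [extendByZero, EuclideanSpace.norm_eq, Fin.sum_univ_castSucc]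

end ExtendByZero

theorem one_le_abs_sum_mul_of_no_partition {ι : Type*} [Fintype ι] {α : ι → ℕ}
    (hno : ¬∃ x : ι → ℤ, (∀ i, x i = 1 ∨ x i = -1) ∧ ∑ i, (α i : ℤ) * x i = 0)
    {v : ι → ℝ} (hv : ∀ i, v i = 1 ∨ v i = -1) : 1 ≤ |∑ i, (α i : ℝ) * v i| := by
  have hint : ∀ i, ∃ z : ℤ, (z = 1 ∨ z = -1) ∧ (z : ℝ) = v i := fun i =>
    (hv i).elim (fun h => ⟨1, .inl rfl, by simp [h]⟩) (fun h => ⟨-1, .inr rfl, by simp [h]⟩)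
  choose x hx hxv using hint
  have hsum : ∑ i, (α i : ℝ) * v i = ((∑ i, (α i : ℤ) * x i : ℤ) : ℝ) := by
    push_cast
    simp only [hxv]
  rw [hsum]
  exact_mod_cast Int.one_le_abs fun h => hno ⟨x, hx, h⟩

theorem abs_sum_mul_le_half_of_mem_slabPn {d : ℕ} {α : Fin d → ℕ}
    {y : EuclideanSpace ℝ (Fin (d + 1))} (hy : y ∈ slabPn d α) :
    |∑ i, (α i : ℝ) * y i.castSucc| ≤ 1 / 2 := by
  obtain ⟨-, -, hlow, hhigh⟩ := hy
  rw [abs_le]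
  constructor <;> linarith

theorem slabPn_avoids_cube_vertices_general (d : ℕ) (α : Fin d → ℕ)
    (hno : ¬∃ x : Fin d → ℤ, (∀ i, x i = 1 ∨ x i = -1) ∧ ∑ i, (α i : ℤ) * x i = 0) :
    (slabPn d α ∩ {y | ∀ j : Fin (d + 1), y j = 1 ∨ y j = -1} = ∅) ∧
      (0 < 1 / (2 * Real.sqrt (∑ i, ((α i : ℝ)) ^ 2)) ∧
        ∀ y ∈ slabPn d α, ∀ w : EuclideanSpace ℝ (Fin (d + 1)),
          (∀ i : Fin d, w i.castSucc = 1 ∨ w i.castSucc = -1) →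
          1 / (2 * Real.sqrt (∑ i, ((α i : ℝ)) ^ 2)) ≤ dist w y) := by
  set a := extendByZero fun i => (α i : ℝ)
  have hinner : ∀ w : EuclideanSpace ℝ (Fin (d + 1)),
      (∀ i : Fin d, w i.castSucc = 1 ∨ w i.castSucc = -1) → 1 ≤ |⟪a, w⟫| := fun w hw => by
    rw [inner_extendByZero]
    exact one_le_abs_sum_mul_of_no_partition hno hw
  have hbound : ∀ y ∈ slabPn d α, ∀ w : EuclideanSpace ℝ (Fin (d + 1)),
      (∀ i : Fin d, w i.castSucc = 1 ∨ w i.castSucc = -1) → 1 / (2 * ‖a‖) ≤ dist w y :=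
    fun y hy w hw => one_div_two_mul_norm_le_dist (hinner w hw)
      (by rw [inner_extendByZero]; exact abs_sum_mul_le_half_of_mem_slabPn hy)
  have hpos : 0 < 1 / (2 * ‖a‖) := by
    have ha := norm_pos_of_one_le_abs_inner (hinner (WithLp.toLp 2 fun _ => 1) fun _ => .inl rfl)
    positivity
  rw [norm_extendByZero] at hbound hpos
  refine ⟨Set.eq_empty_of_forall_notMem ?_, hpos, hbound⟩
  rintro y ⟨hy, hvertex⟩
  have hself := hbound y hy y fun i => hvertex i.castSucc
  rw [dist_self] at hself
  linarith

/-- If the Partition instance `α` has no `±1` solution, then `P_n ∩ {-1,1}ⁿ = ∅`;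
moreover every `y ∈ P_n` and every `w` whose first `n-1` coordinates are `±1`
satisfy `|w - y| ≥ 1/(2|α|) > 0`. -/
theorem slabPn_avoids_cube_vertices (d : ℕ) (α : Fin d → ℕ) (hα : ∀ i, 0 < α i)
    (hno : ¬∃ x : Fin d → ℤ, (∀ i, x i = 1 ∨ x i = -1) ∧ ∑ i, (α i : ℤ) * x i = 0) :
    (slabPn d α ∩ {y | ∀ j : Fin (d + 1), y j = 1 ∨ y j = -1} = ∅) ∧
      (0 < 1 / (2 * Real.sqrt (∑ i, ((α i : ℝ)) ^ 2)) ∧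
        ∀ y ∈ slabPn d α, ∀ w : EuclideanSpace ℝ (Fin (d + 1)),
          (∀ i : Fin d, w i.castSucc = 1 ∨ w i.castSucc = -1) →
          1 / (2 * Real.sqrt (∑ i, ((α i : ℝ)) ^ 2)) ≤ dist w y) :=
  slabPn_avoids_cube_vertices_general d α hno
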